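/- Let (V,‖·‖) be a Banach space and Ψ : V → ℝ a C¹ functional such that (a) Ψ(0) = 0, (b) there exist ρ, R > 0 with Ψ(u) ≥ ρ for all u ∈ V with ‖u‖ = R, and (c) there exists v₀ ∈ V with limsup_{t→∞} Ψ(t v₀) < 0. Let t₀ > 0 be such that ‖t₀v₀‖ > R and Ψ(t₀v₀) < 0, and set c_{v₀}(Ψ) = inf_{σ∈Γ} sup_{t∈[0,1]} Ψ(σ(t)) where Γ = {σ ∈ C([0,1],V) : σ(0) = 0, σ(1) = t₀v₀}. Then c_{v₀}(Ψ) ≥ ρ > 0 and there exists a sequence (w_k) in V with Ψ(w_k) → c_{v₀}(Ψ) and Ψ′(w_k) → 0 strongly in the dual V′. -/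

import Mathlib

/-!
A path from `0` to `t₀ • v₀` crosses the sphere `‖u‖ = R`, where `Ψ ≥ ρ`, so every path level,
hence their infimum `c`, is at least `ρ`.

For the Palais–Smale sequence apply Ekeland's variational principle to `g ↦ max Ψ ∘ g` on the
complete space of such paths: it gives an almost minimal path `g` that no other path `h` undercuts
by more than `ε / 4 * dist g h`. If `‖Ψ'‖ > ε` wherever `|Ψ - c| ≤ ε`, a partition of unity glues
local descent directions into a continuous unit field along `g`; pushing the high part of `g`
along it lowers the maximum by `ε / 2` times the displacement, a contradiction.
-/

open Filter Topology Set Metric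

lemma exists_mem_forall_le_add {X : Type*} {F : X → ℝ} {s : Set X} (hs : s.Nonempty)
    (hF : BddBelow (F '' s)) {η : ℝ} (hη : 0 < η) : ∃ y ∈ s, ∀ w ∈ s, F y ≤ F w + η := by
  obtain ⟨_, ⟨y, hy, rfl⟩, hlt⟩ := Real.lt_sInf_add_pos (hs.image F) hη
  exact ⟨y, hy, fun w hw => by linarith [csInf_le hF ⟨w, hw, rfl⟩]⟩

section Ekeland

variable {X : Type*} [MetricSpace X] {F : X → ℝ} {α : ℝ}

def ekelandSet (F : X → ℝ) (α : ℝ) (x : X) : Set X := {y | F y + α * dist x y ≤ F x}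

lemma mem_ekelandSet_self (x : X) : x ∈ ekelandSet F α x := by
  simp [ekelandSet]

lemma ekelandSet_subset_of_mem (hα : 0 ≤ α) {x y : X} (hy : y ∈ ekelandSet F α x) :
    ekelandSet F α y ⊆ ekelandSet F α x := fun w hw => by
  have := mul_le_mul_of_nonneg_left (dist_triangle x y w) hα
  simp only [ekelandSet, mem_ofPred_eq] at hy hw ⊢
  linarith

lemma LowerSemicontinuous.isClosed_ekelandSet (hF : LowerSemicontinuous F) (x : X) :
    IsClosed (ekelandSet F α x) :=
  (hF.add (continuous_const.mul (continuous_const.dist continuous_id)).lowerSemicontinuous)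
    |>.isClosed_preimage (F x)

/-- Each term nearly minimises `F` on the Ekeland set of its predecessor. -/
lemma exists_seq_ekelandSet (hbdd : BddBelow (range F)) (hα : 0 ≤ α) (x₀ : X) :
    ∃ x : ℕ → X, x 0 ∈ ekelandSet F α x₀ ∧ (∀ n, x (n + 1) ∈ ekelandSet F α (x n)) ∧
      ∀ n, ∀ w ∈ ekelandSet F α (x n), α * dist (x n) w ≤ 2⁻¹ ^ n := by
  choose next hnext_mem hnext_le using fun (n : ℕ) (y : X) =>
    exists_mem_forall_le_add ⟨y, mem_ekelandSet_self (F := F) (α := α) y⟩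
      (hbdd.mono (image_subset_range _ _)) (pow_pos (inv_pos.2 (two_pos (α := ℝ))) n)
  have hsmall : ∀ n y, ∀ w ∈ ekelandSet F α (next n y), α * dist (next n y) w ≤ 2⁻¹ ^ n := by
    intro n y w hw
    have := hnext_le n y w (ekelandSet_subset_of_mem hα (hnext_mem n y) hw)
    simp only [ekelandSet, mem_ofPred_eq] at hw
    linarith
  let x : ℕ → X := fun n => Nat.rec (next 0 x₀) (fun k y => next (k + 1) y) n
  refine ⟨x, hnext_mem 0 x₀, fun n => hnext_mem (n + 1) (x n), fun n => ?_⟩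
  cases n
  exacts [hsmall 0 x₀, hsmall _ _]

theorem LowerSemicontinuous.exists_forall_lt_add_mul_dist [CompleteSpace X]
    (hF : LowerSemicontinuous F) (hbdd : BddBelow (range F)) (hα : 0 < α) (x₀ : X) :
    ∃ x, F x ≤ F x₀ ∧ ∀ y, y ≠ x → F x < F y + α * dist x y := by
  obtain ⟨x, hx0, hsucc, hsmall⟩ := exists_seq_ekelandSet hbdd hα.le x₀
  have hnested : ∀ n m, n ≤ m → ekelandSet F α (x m) ⊆ ekelandSet F α (x n) :=
    fun _ _ h => (antitone_nat_of_succ_le fun k => ekelandSet_subset_of_mem hα.le (hsucc k) :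
      Antitone fun k => ekelandSet F α (x k)) h
  have hdist : ∀ n, ∀ w ∈ ekelandSet F α (x n), dist (x n) w ≤ 2⁻¹ ^ n / α := fun n w hw =>
    (le_div_iff₀' hα).2 (hsmall n w hw)
  have hdiam : ∀ n, ∀ w ∈ ekelandSet F α (x n), ∀ w' ∈ ekelandSet F α (x n),
      dist w w' ≤ 2 * (2⁻¹ ^ n / α) := fun n w hw w' hw' => by
    linarith [dist_triangle_left w w' (x n), hdist n w hw, hdist n w' hw']
  have hbound : Tendsto (fun n : ℕ => 2 * ((2⁻¹ : ℝ) ^ n / α)) atTop (𝓝 0) := by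
    simpa using ((tendsto_pow_atTop_nhds_zero_of_lt_one (r := (2⁻¹ : ℝ)) (by norm_num)
      (by norm_num)).div_const α).const_mul (2 : ℝ)
  obtain ⟨z, hz⟩ := cauchySeq_tendsto_of_complete <| cauchySeq_of_le_tendsto_0 _
    (fun m k n hm hk => hdiam n _ (hnested n m hm (mem_ekelandSet_self _)) _
      (hnested n k hk (mem_ekelandSet_self _))) hbound
  have hzmem : ∀ n, z ∈ ekelandSet F α (x n) := fun n =>
    (hF.isClosed_ekelandSet _).mem_of_tendsto hz
      (eventually_atTop.2 ⟨n, fun m hm => hnested n m hm (mem_ekelandSet_self _)⟩)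
  refine ⟨z, ?_, fun y hyz => ?_⟩
  · have := ekelandSet_subset_of_mem hα.le hx0 (hzmem 0)
    simp only [ekelandSet, mem_ofPred_eq] at this
    nlinarith [dist_nonneg (x := x₀) (y := z)]
  · by_contra! hy
    have hyz' : dist z y ≤ 0 := ge_of_tendsto' hbound fun n =>
      hdiam n z (hzmem n) y (ekelandSet_subset_of_mem hα.le (hzmem n) hy)
    exact hyz (dist_le_zero.1 hyz').symm

end Ekeland

theorem IsCompact.exists_pos_forall_dist_lt {α β : Type*} [PseudoMetricSpace α]
    [PseudoMetricSpace β] {K : Set α} (hK : IsCompact K) {f : α → β} (hf : Continuous f)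
    {ε : ℝ} (hε : 0 < ε) : ∃ r > 0, ∀ x ∈ K, ∀ y, dist x y < r → dist (f x) (f y) < ε := by
  obtain ⟨r, hr, hsub⟩ := Metric.mem_uniformity_dist.1 <|
    hK.uniformContinuousAt_of_continuousAt f (fun x _ => hf.continuousAt)
      (Metric.dist_mem_uniformity hε)
  exact ⟨r, hr, fun x hx y hxy => hsub hxy hx⟩

lemma ContinuousLinearMap.exists_norm_le_one_lt_apply {V : Type*} [NormedAddCommGroup V]
    [NormedSpace ℝ V] (f : V →L[ℝ] ℝ) {r : ℝ} (hr : r < ‖f‖) : ∃ x, ‖x‖ ≤ 1 ∧ r < f x := by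
  obtain ⟨x, hx, hrx⟩ := f.exists_lt_apply_of_lt_opNorm hr
  rcases le_total 0 (f x) with h | h
  · exact ⟨x, hx.le, by rwa [Real.norm_of_nonneg h] at hrx⟩
  · exact ⟨-x, by rw [norm_neg]; exact hx.le, by rwa [Real.norm_of_nonpos h, ← map_neg] at hrx⟩

theorem exists_continuous_norm_le_one_lt_apply {X V : Type*} [TopologicalSpace X]
    [NormalSpace X] [ParacompactSpace X] [NormedAddCommGroup V] [NormedSpace ℝ V]
    {L : X → V →L[ℝ] ℝ} (hL : Continuous L) {B Z : Set X} (hB : IsClosed B) (hZ : IsClosed Z)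
    (hBZ : Disjoint B Z) {ε : ℝ} (hε : ∀ x ∈ B, ε < ‖L x‖) :
    ∃ v : C(X, V), (∀ x, ‖v x‖ ≤ 1) ∧ (∀ x ∈ B, ε < L x (v x)) ∧ ∀ x ∈ Z, v x = 0 := by
  set t : X → Set V := fun x => {w | ‖w‖ ≤ 1 ∧ (x ∈ B → ε < L x w) ∧ (x ∈ Z → w = 0)}
  have hconvex_imp : ∀ (P : Prop) (s : Set V), Convex ℝ s → Convex ℝ {w | P → w ∈ s} :=
    fun P s hs => by by_cases hP : P <;> simp [hP, hs, convex_univ]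
  have hball : Convex ℝ {w : V | ‖w‖ ≤ 1} := by
    convert convex_closedBall (0 : V) 1 using 1; ext; simp
  have hconvex : ∀ x, Convex ℝ (t x) := fun x =>
    hball.inter ((hconvex_imp _ _ (convex_halfSpace_gt (L x).isLinear ε)).inter
      (hconvex_imp _ _ (convex_singleton 0)))
  have hlocal : ∀ x, ∃ w : V, ∀ᶠ y in 𝓝 x, w ∈ t y := fun x => by
    by_cases hxB : x ∈ B
    · obtain ⟨w, hw, hεw⟩ := (L x).exists_norm_le_one_lt_apply (hε x hxB)
      have hopen : IsOpen {y | ε < L y w} :=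
        isOpen_lt continuous_const ((ContinuousLinearMap.apply ℝ ℝ w).continuous.comp hL)
      refine ⟨w, ?_⟩
      filter_upwards [hopen.mem_nhds hεw, hZ.isOpen_compl.mem_nhds (hBZ.notMem_of_mem_left hxB)]
        with y hy hyZ
      exact ⟨hw, fun _ => hy, fun h => absurd h hyZ⟩
    · refine ⟨0, ?_⟩
      filter_upwards [hB.isOpen_compl.mem_nhds hxB] with y hy
      exact ⟨by simp, fun h => absurd h hy, fun _ => rfl⟩
  obtain ⟨v, hv⟩ := exists_continuous_forall_mem_convex_of_local_const hconvex hlocal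
  exact ⟨v, fun x => (hv x).1, fun x => (hv x).2.1, fun x => (hv x).2.2⟩

theorem image_add_le_of_forall_mem_ball_norm_fderiv_sub_le {E : Type*} [NormedAddCommGroup E]
    [NormedSpace ℝ E] {f : E → ℝ} (hf : Differentiable ℝ f) {x : E} {r η : ℝ}
    (hη : ∀ y ∈ ball x r, ‖fderiv ℝ f y - fderiv ℝ f x‖ ≤ η) {v : E} (hv : ‖v‖ < r) :
    f (x + v) ≤ f x + fderiv ℝ f x v + η * ‖v‖ := by
  have hmem : x + v ∈ ball x r := by simpa using hv
  have := (convex_ball x r).norm_image_sub_le_of_norm_fderiv_le' (fun y _ => hf y) hη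
    (mem_ball_self (hv.trans_le' (norm_nonneg v))) hmem
  rw [add_sub_cancel_left, Real.norm_eq_abs] at this
  linarith [le_abs_self (f (x + v) - f x - fderiv ℝ f x v)]

section MountainPass

open unitInterval

noncomputable def pathMax {X : Type*} [TopologicalSpace X] (Ψ : X → ℝ) (g : C(I, X)) : ℝ :=
  ⨆ t, Ψ (g t)

section PathMax

variable {X : Type*} [TopologicalSpace X] {Ψ : X → ℝ}

lemma bddAbove_range_comp (hΨ : Continuous Ψ) (g : C(I, X)) : BddAbove (range fun t => Ψ (g t)) :=
  (isCompact_range (hΨ.comp g.continuous)).bddAbove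

lemma le_pathMax (hΨ : Continuous Ψ) (g : C(I, X)) (t : I) : Ψ (g t) ≤ pathMax Ψ g :=
  le_ciSup (bddAbove_range_comp hΨ g) t

lemma lowerSemicontinuous_pathMax (hΨ : Continuous Ψ) : LowerSemicontinuous (pathMax Ψ) :=
  lowerSemicontinuous_ciSup (bddAbove_range_comp hΨ) fun t =>
    (hΨ.comp (continuous_eval_const t)).lowerSemicontinuous

lemma sSup_image_Icc_eq_pathMax {γ : ℝ → X} (hγ : ContinuousOn γ (Icc 0 1)) :
    sSup ((fun t => Ψ (γ t)) '' Icc 0 1) = pathMax Ψ ⟨(Icc 0 1).domRestrict γ, hγ.domRestrict⟩ := by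
  rw [image_eq_range]; rfl

lemma setOf_sSup_image_Icc_eq_image_pathMax (a b : X) :
    {y : ℝ | ∃ γ : ℝ → X, ContinuousOn γ (Icc 0 1) ∧ γ 0 = a ∧ γ 1 = b ∧
      y = sSup ((fun t => Ψ (γ t)) '' Icc 0 1)} = pathMax Ψ '' {g | g 0 = a ∧ g 1 = b} := by
  ext y
  constructor
  · rintro ⟨γ, hγ, hγ0, hγ1, rfl⟩
    exact ⟨_, ⟨hγ0, hγ1⟩, (sSup_image_Icc_eq_pathMax hγ).symm⟩
  · rintro ⟨g, ⟨hg0, hg1⟩, rfl⟩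
    have hγ := (g.continuous.Icc_extend' (h := zero_le_one' ℝ)).continuousOn (s := Icc 0 1)
    refine ⟨IccExtend zero_le_one g, hγ, ?_, ?_, ?_⟩
    · simpa using hg0
    · simpa using hg1
    · rw [sSup_image_Icc_eq_pathMax hγ]
      congr
      ext t
      exact (IccExtend_val _ _ t).symm

end PathMax

lemma le_pathMax_of_forall_norm_eq {V : Type*} [NormedAddCommGroup V] {Ψ : V → ℝ}
    (hΨ : Continuous Ψ) {ρ R : ℝ} (hmin : ∀ u : V, ‖u‖ = R → ρ ≤ Ψ u) {g : C(I, V)}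
    (h0 : ‖g 0‖ ≤ R) (h1 : R ≤ ‖g 1‖) : ρ ≤ pathMax Ψ g := by
  obtain ⟨t, ht⟩ := intermediate_value_univ 0 1 (continuous_norm.comp g.continuous) ⟨h0, h1⟩
  exact (hmin _ ht).trans (le_pathMax hΨ g t)

section Deformation

variable {V : Type*} [NormedAddCommGroup V] [NormedSpace ℝ V] {Ψ : V → ℝ}

theorem exists_pathMax_le_sub_of_lt_norm_fderiv (hΨ : ContDiff ℝ 1 Ψ) (g : C(I, V)) {ε : ℝ}
    (hε : 0 < ε) (h0 : Ψ (g 0) ≤ pathMax Ψ g - ε) (h1 : Ψ (g 1) ≤ pathMax Ψ g - ε)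
    (hgrad : ∀ t, pathMax Ψ g - ε / 2 ≤ Ψ (g t) → ε < ‖fderiv ℝ Ψ (g t)‖) :
    ∃ δ > 0, ∃ h : C(I, V), h 0 = g 0 ∧ h 1 = g 1 ∧ dist g h ≤ δ ∧
      pathMax Ψ h ≤ pathMax Ψ g - ε / 2 * δ := by
  set M := pathMax Ψ g
  have hΨc : Continuous Ψ := hΨ.continuous
  have hΨgc : Continuous fun t => Ψ (g t) := hΨc.comp g.continuous
  have hΨ'c : Continuous (fderiv ℝ Ψ) := hΨ.continuous_fderiv one_ne_zero
  obtain ⟨v, hv_norm, hv_desc, hv_zero⟩ := exists_continuous_norm_le_one_lt_apply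
    (hΨ'c.comp g.continuous) (isClosed_le continuous_const hΨgc) (isClosed_le hΨgc continuous_const)
    (Set.disjoint_left.2 fun t (ht : M - ε / 2 ≤ _) (ht' : _ ≤ M - ε) => by linarith) hgrad
  obtain ⟨r₁, hr₁, hΨ'_near⟩ :=
    (isCompact_range g.continuous).exists_pos_forall_dist_lt hΨ'c (half_pos hε)
  obtain ⟨r₂, hr₂, hΨ_near⟩ :=
    (isCompact_range g.continuous).exists_pos_forall_dist_lt hΨc (by positivity : 0 < ε / 4)
  -- Where `Ψ (g t) ≥ M - ε / 2` the step is first-order accurate up to `ε / 2 * δ`; elsewhere it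
  -- raises `Ψ` by less than `ε / 4`, which `δ ≤ 1 / 2` keeps below `M - ε / 2 * δ`.
  set δ := min (min r₁ r₂ / 2) (1 / 2)
  have hδ : 0 < δ := by positivity
  have hδr₁ : δ < r₁ := by
    linarith [min_le_left (min r₁ r₂ / 2) (1 / 2), min_le_left r₁ r₂]
  have hδr₂ : δ < r₂ := by
    linarith [min_le_left (min r₁ r₂ / 2) (1 / 2), min_le_right r₁ r₂]
  have hδ_half : δ ≤ 1 / 2 := min_le_right _ _
  have hstep : ∀ t, ‖-(δ • v t)‖ ≤ δ := fun t => by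
    rw [norm_neg, norm_smul, Real.norm_of_nonneg hδ.le]
    exact mul_le_of_le_one_right hδ.le (hv_norm t)
  refine ⟨δ, hδ, g - δ • v, by simp [hv_zero 0 h0], by simp [hv_zero 1 h1], ?_, ?_⟩
  · refine (ContinuousMap.dist_le hδ.le).2 fun t => ?_
    simpa [dist_eq_norm] using hstep t
  refine ciSup_le fun t => ?_
  change Ψ (g t - δ • v t) ≤ M - ε / 2 * δ
  rw [sub_eq_add_neg]
  by_cases ht : M - ε / 2 ≤ Ψ (g t)
  · have hmvt := image_add_le_of_forall_mem_ball_norm_fderiv_sub_le (x := g t) (η := ε / 2)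
      (hΨ.differentiable one_ne_zero) (fun y hy => by
        rw [← dist_eq_norm, dist_comm]
        exact (hΨ'_near _ (mem_range_self t) y (mem_ball'.1 hy)).le) ((hstep t).trans_lt hδr₁)
    have hdesc : δ * ε ≤ δ * fderiv ℝ Ψ (g t) (v t) :=
      mul_le_mul_of_nonneg_left (hv_desc t ht).le hδ.le
    rw [map_neg, map_smul, smul_eq_mul] at hmvt
    nlinarith [le_pathMax hΨc g t, hstep t]
  · have hclose := hΨ_near _ (mem_range_self t) (g t + -(δ • v t))
      (by rw [dist_self_add_right]; exact (hstep t).trans_lt hδr₂)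
    rw [Real.dist_eq, abs_lt] at hclose
    nlinarith

end Deformation

section Minimax

variable {V : Type*} [NormedAddCommGroup V] [NormedSpace ℝ V] [CompleteSpace V] {Ψ : V → ℝ}

def IsPalaisSmaleSeq (Ψ : V → ℝ) (c : ℝ) (w : ℕ → V) : Prop :=
  Tendsto (fun k => Ψ (w k)) atTop (𝓝 c) ∧ Tendsto (fun k => ‖fderiv ℝ Ψ (w k)‖) atTop (𝓝 0)

theorem exists_abs_sub_le_norm_fderiv_le_of_isGLB_pathMax (hΨ : ContDiff ℝ 1 Ψ) {a b : V}
    {c : ℝ} (hc : IsGLB (pathMax Ψ '' {g | g 0 = a ∧ g 1 = b}) c) {ε : ℝ} (hε : 0 < ε)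
    (ha : Ψ a ≤ c - ε) (hb : Ψ b ≤ c - ε) : ∃ u, |Ψ u - c| ≤ ε ∧ ‖fderiv ℝ Ψ u‖ ≤ ε := by
  by_contra! hcrit
  set Γ := {g : C(I, V) | g 0 = a ∧ g 1 = b}
  have hΓ : IsClosed Γ := (isClosed_eq (continuous_eval_const 0) continuous_const).inter
    (isClosed_eq (continuous_eval_const 1) continuous_const)
  have : CompleteSpace Γ := hΓ.completeSpace_coe
  have hc_le : ∀ g : Γ, c ≤ pathMax Ψ g := fun g => hc.1 ⟨g, g.2, rfl⟩
  obtain ⟨_, ⟨g₀, hg₀, rfl⟩, -, hg₀_lt⟩ := hc.exists_between (lt_add_of_pos_right c hε)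
  obtain ⟨g, hg_le, hg_min⟩ :=
    ((lowerSemicontinuous_pathMax hΨ.continuous).comp continuous_subtype_val
      ).exists_forall_lt_add_mul_dist ⟨c, forall_mem_range.2 hc_le⟩ (by positivity : 0 < ε / 4)
      (⟨g₀, hg₀⟩ : Γ)
  have hg_lt : pathMax Ψ g < c + ε := hg_le.trans_lt hg₀_lt
  obtain ⟨δ, hδ, h, h0, h1, hdist, hmax⟩ := exists_pathMax_le_sub_of_lt_norm_fderiv hΨ g.1 hε
    (by rw [g.2.1]; linarith [hc_le g]) (by rw [g.2.2]; linarith [hc_le g])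
    fun t ht => hcrit _ (abs_le.2 ⟨by linarith [hc_le g],
      by linarith [le_pathMax hΨ.continuous g.1 t]⟩)
  have hne : (⟨h, h0.trans g.2.1, h1.trans g.2.2⟩ : Γ) ≠ g := fun heq => by
    rw [← heq] at hmax
    nlinarith
  have := hg_min _ hne
  change pathMax Ψ g < pathMax Ψ h + ε / 4 * dist g.1 h at this
  nlinarith [mul_le_mul_of_nonneg_left hdist (by positivity : 0 ≤ ε / 4)]

theorem exists_isPalaisSmaleSeq_of_isGLB_pathMax (hΨ : ContDiff ℝ 1 Ψ) {a b : V} {c : ℝ}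
    (hc : IsGLB (pathMax Ψ '' {g | g 0 = a ∧ g 1 = b}) c) (ha : Ψ a < c) (hb : Ψ b < c) :
    ∃ w, IsPalaisSmaleSeq Ψ c w := by
  set ε : ℕ → ℝ := fun k => min (c - max (Ψ a) (Ψ b)) (1 / (k + 1))
  have hε_pos : ∀ k, 0 < ε k := fun k =>
    lt_min (sub_pos.2 (max_lt ha hb)) Nat.one_div_pos_of_nat
  have hε_lim : Tendsto ε atTop (𝓝 0) := squeeze_zero (fun k => (hε_pos k).le)
    (fun k => min_le_right _ _) tendsto_one_div_add_atTop_nhds_zero_nat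
  have hε_le : ∀ k, ε k ≤ c - max (Ψ a) (Ψ b) := fun k => min_le_left _ _
  choose w hw_val hw_grad using fun k =>
    exists_abs_sub_le_norm_fderiv_le_of_isGLB_pathMax hΨ hc (hε_pos k)
      (by linarith [hε_le k, le_max_left (Ψ a) (Ψ b)])
      (by linarith [hε_le k, le_max_right (Ψ a) (Ψ b)])
  refine ⟨w, tendsto_iff_norm_sub_tendsto_zero.2 ?_, ?_⟩
  · exact squeeze_zero (fun _ => norm_nonneg _) hw_val hε_lim
  · exact squeeze_zero (fun _ => norm_nonneg _) hw_grad hε_lim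

end Minimax

end MountainPass

theorem mountain_pass_palais_smale_sequence_general
    (V : Type*) [NormedAddCommGroup V] [NormedSpace ℝ V] [CompleteSpace V]
    (Ψ : V → ℝ) (hΨC1 : ContDiff ℝ 1 Ψ) (hΨ0 : Ψ 0 = 0)
    (ρ R : ℝ) (hρ : 0 < ρ) (hR : 0 < R)
    (hmin : ∀ u : V, ‖u‖ = R → ρ ≤ Ψ u)
    (v₀ : V)
    (t₀ : ℝ) (ht₀R : R < ‖t₀ • v₀‖) (ht₀neg : Ψ (t₀ • v₀) < 0) :
    ρ ≤ sInf { y : ℝ | ∃ σ : ℝ → V, ContinuousOn σ (Icc 0 1) ∧ σ 0 = 0 ∧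
        σ 1 = t₀ • v₀ ∧ y = sSup ((fun t => Ψ (σ t)) '' Icc 0 1) } ∧
    ∃ w : ℕ → V,
      Tendsto (fun k => Ψ (w k)) atTop
        (𝓝 (sInf { y : ℝ | ∃ σ : ℝ → V, ContinuousOn σ (Icc 0 1) ∧ σ 0 = 0 ∧
          σ 1 = t₀ • v₀ ∧ y = sSup ((fun t => Ψ (σ t)) '' Icc 0 1) })) ∧
      Tendsto (fun k => ‖fderiv ℝ Ψ (w k)‖) atTop (𝓝 0) := by
  rw [setOf_sSup_image_Icc_eq_image_pathMax]
  set levels := pathMax Ψ '' {g | g 0 = 0 ∧ g 1 = t₀ • v₀}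
  have hρ_le : ∀ y ∈ levels, ρ ≤ y := by
    rintro _ ⟨g, ⟨hg0, hg1⟩, rfl⟩
    exact le_pathMax_of_forall_norm_eq hΨC1.continuous hmin (by simp [hg0, hR.le])
      (hg1 ▸ ht₀R.le)
  have hne : levels.Nonempty :=
    ⟨_, ⟨fun t : unitInterval => (t : ℝ) • (t₀ • v₀), by fun_prop⟩, ⟨by simp, by simp⟩, rfl⟩
  have hρ_inf : ρ ≤ sInf levels := le_csInf hne hρ_le
  exact ⟨hρ_inf, exists_isPalaisSmaleSeq_of_isGLB_pathMax hΨC1 (isGLB_csInf hne ⟨ρ, hρ_le⟩)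
    (by linarith) (by linarith)⟩

/-- Mountain Pass Lemma of Ambrosetti–Rabinowitz: a `C¹` functional `Ψ` on a
Banach space with `Ψ(0) = 0`, a ring of mountains of height `ρ` at radius `R`,
and a point `t₀v₀` beyond the ring where `Ψ` is negative, admits a Palais–Smale
sequence at the mountain pass level `c_{v₀}(Ψ) ≥ ρ > 0`. -/
theorem mountain_pass_palais_smale_sequence
    (V : Type*) [NormedAddCommGroup V] [NormedSpace ℝ V] [CompleteSpace V]
    (Ψ : V → ℝ) (hΨC1 : ContDiff ℝ 1 Ψ) (hΨ0 : Ψ 0 = 0)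
    (ρ R : ℝ) (hρ : 0 < ρ) (hR : 0 < R)
    (hmin : ∀ u : V, ‖u‖ = R → ρ ≤ Ψ u)
    (v₀ : V) (hv₀ : limsup (fun t : ℝ => Ψ (t • v₀)) atTop < 0)
    (t₀ : ℝ) (ht₀ : 0 < t₀) (ht₀R : R < ‖t₀ • v₀‖) (ht₀neg : Ψ (t₀ • v₀) < 0) :
    ρ ≤ sInf { y : ℝ | ∃ σ : ℝ → V, ContinuousOn σ (Icc 0 1) ∧ σ 0 = 0 ∧
        σ 1 = t₀ • v₀ ∧ y = sSup ((fun t => Ψ (σ t)) '' Icc 0 1) } ∧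
    ∃ w : ℕ → V,
      Tendsto (fun k => Ψ (w k)) atTop
        (𝓝 (sInf { y : ℝ | ∃ σ : ℝ → V, ContinuousOn σ (Icc 0 1) ∧ σ 0 = 0 ∧
          σ 1 = t₀ • v₀ ∧ y = sSup ((fun t => Ψ (σ t)) '' Icc 0 1) })) ∧
      Tendsto (fun k => ‖fderiv ℝ Ψ (w k)‖) atTop (𝓝 0) :=
  mountain_pass_palais_smale_sequence_general V Ψ hΨC1 hΨ0 ρ R hρ hR hmin v₀ t₀ ht₀R ht₀neg
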